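/- arXiv:1003.1557 — 4 statements merged into one kernel-verified Lean document; each statement's English description precedes it below -/
import Mathlib

section
/- Suppose v1 ≥ v2 + v3 + v4 with all vi > 0. Then a point p of the probability simplex satisfies L(v,p) = v1/27 if and only if p = (0, 1/3, 1/3, 1/3); in particular, (0,1/3,1/3,1/3) is the unique maximizer of L(v,·) over the probability simplex. -/
/-!
Write `δ = v1 - (v2 + v3 + v4) ≥ 0`. Grouping the monomials of `L` as
`L = v4·p2p3(p1+p4) + v3·p2p4(p1+p3) + v2·p3p4(p1+p2) + δ·p2p3p4`
exhibits `L` as a combination with nonnegative coefficients summing to `v1` of four products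
of three nonnegative numbers with sum at most `1`. By AM-GM each product is at most `1/27`, so
`L ≤ v1/27`. At equality the first two products, whose coefficients are positive, equal `1/27`;
the equality case of AM-GM then forces `p2 = p3 = p4 = 1/3`, hence `p1 = 0`.
-/

lemma mul_mul_le_of_add_add_le_one {a b c : ℝ} (ha : 0 ≤ a) (hb : 0 ≤ b) (hc : 0 ≤ c)
    (hs : a + b + c ≤ 1) : a * b * c ≤ 1 / 27 := by
  -- `(a+b+c)^3 - 27abc = (a+b+c)·((a-b)^2+(b-c)^2+(c-a)^2)/2 + 3(a(b-c)^2+b(c-a)^2+c(a-b)^2)`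
  have hamgm : 27 * (a * b * c) ≤ (a + b + c) ^ 3 := by
    nlinarith [mul_nonneg (add_nonneg (add_nonneg ha hb) hc) (sq_nonneg (a - b)),
      mul_nonneg (add_nonneg (add_nonneg ha hb) hc) (sq_nonneg (b - c)),
      mul_nonneg (add_nonneg (add_nonneg ha hb) hc) (sq_nonneg (c - a)),
      mul_nonneg ha (sq_nonneg (b - c)), mul_nonneg hb (sq_nonneg (c - a)),
      mul_nonneg hc (sq_nonneg (a - b))]
  have hcube : (a + b + c) ^ 3 ≤ 1 := pow_le_one₀ (by positivity) hs
  linarith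

lemma eq_one_third_of_mul_mul_eq {a b c : ℝ} (ha : 0 ≤ a) (hb : 0 ≤ b) (hc : 0 ≤ c)
    (hs : a + b + c = 1) (h : a * b * c = 1 / 27) : a = 1 / 3 ∧ b = 1 / 3 ∧ c = 1 / 3 := by
  obtain rfl : c = 1 - a - b := by linarith
  have hsq : (a - b) ^ 2 + (b - (1 - a - b)) ^ 2 ≤ 0 := by
    nlinarith [sq_nonneg (a - b), sq_nonneg (b - (1 - a - b)), sq_nonneg (1 - a - b - a),
      mul_nonneg ha (sq_nonneg (b - (1 - a - b))), mul_nonneg hb (sq_nonneg (1 - a - b - a)),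
      mul_nonneg hc (sq_nonneg (a - b))]
  have hab : a - b = 0 := by nlinarith [sq_nonneg (a - b), sq_nonneg (b - (1 - a - b))]
  have hbc : b - (1 - a - b) = 0 := by nlinarith [sq_nonneg (a - b), sq_nonneg (b - (1 - a - b))]
  refine ⟨?_, ?_, ?_⟩ <;> linarith

def simplexCubic (v1 v2 v3 v4 p1 p2 p3 p4 : ℝ) : ℝ :=
  v4 * p1 * p2 * p3 + v3 * p1 * p2 * p4 + v2 * p1 * p3 * p4 + v1 * p2 * p3 * p4

lemma div_27_sub_simplexCubic (v1 v2 v3 v4 p1 p2 p3 p4 : ℝ) :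
    v1 / 27 - simplexCubic v1 v2 v3 v4 p1 p2 p3 p4 =
      v4 * (1 / 27 - p2 * p3 * (p1 + p4)) + v3 * (1 / 27 - p2 * p4 * (p1 + p3)) +
        v2 * (1 / 27 - p3 * p4 * (p1 + p2)) +
          (v1 - (v2 + v3 + v4)) * (1 / 27 - p2 * p3 * p4) := by
  unfold simplexCubic
  ring

lemma simplexCubic_zero_third_third_third (v1 v2 v3 v4 : ℝ) :
    simplexCubic v1 v2 v3 v4 0 (1 / 3) (1 / 3) (1 / 3) = v1 / 27 := by
  unfold simplexCubic
  ring

section SimplexCubic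

variable {v1 v2 v3 v4 p1 p2 p3 p4 : ℝ}

lemma triple_products_le_of_mem_simplex (h1 : 0 ≤ p1) (h2 : 0 ≤ p2) (h3 : 0 ≤ p3)
    (h4 : 0 ≤ p4) (hs : p1 + p2 + p3 + p4 = 1) :
    p2 * p3 * (p1 + p4) ≤ 1 / 27 ∧ p2 * p4 * (p1 + p3) ≤ 1 / 27 ∧
      p3 * p4 * (p1 + p2) ≤ 1 / 27 ∧ p2 * p3 * p4 ≤ 1 / 27 :=
  ⟨mul_mul_le_of_add_add_le_one h2 h3 (by positivity) (by linarith),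
    mul_mul_le_of_add_add_le_one h2 h4 (by positivity) (by linarith),
    mul_mul_le_of_add_add_le_one h3 h4 (by positivity) (by linarith),
    mul_mul_le_of_add_add_le_one h2 h3 h4 (by linarith)⟩

lemma simplexCubic_le (hv2 : 0 ≤ v2) (hv3 : 0 ≤ v3) (hv4 : 0 ≤ v4) (hsat : v2 + v3 + v4 ≤ v1)
    (h1 : 0 ≤ p1) (h2 : 0 ≤ p2) (h3 : 0 ≤ p3) (h4 : 0 ≤ p4) (hs : p1 + p2 + p3 + p4 = 1) :
    simplexCubic v1 v2 v3 v4 p1 p2 p3 p4 ≤ v1 / 27 := by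
  obtain ⟨hA, hB, hC, hD⟩ := triple_products_le_of_mem_simplex h1 h2 h3 h4 hs
  rw [← sub_nonneg, div_27_sub_simplexCubic]
  have hδ : 0 ≤ v1 - (v2 + v3 + v4) := by linarith
  linarith [mul_nonneg hv4 (sub_nonneg.2 hA), mul_nonneg hv3 (sub_nonneg.2 hB),
    mul_nonneg hv2 (sub_nonneg.2 hC), mul_nonneg hδ (sub_nonneg.2 hD)]

lemma eq_of_simplexCubic_eq (hv2 : 0 ≤ v2) (hv3 : 0 < v3) (hv4 : 0 < v4)
    (hsat : v2 + v3 + v4 ≤ v1) (h1 : 0 ≤ p1) (h2 : 0 ≤ p2) (h3 : 0 ≤ p3) (h4 : 0 ≤ p4)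
    (hs : p1 + p2 + p3 + p4 = 1) (heq : simplexCubic v1 v2 v3 v4 p1 p2 p3 p4 = v1 / 27) :
    p1 = 0 ∧ p2 = 1 / 3 ∧ p3 = 1 / 3 ∧ p4 = 1 / 3 := by
  obtain ⟨hA, hB, hC, hD⟩ := triple_products_le_of_mem_simplex h1 h2 h3 h4 hs
  have hzero := div_27_sub_simplexCubic v1 v2 v3 v4 p1 p2 p3 p4
  rw [heq, sub_self] at hzero
  have hδ : 0 ≤ v1 - (v2 + v3 + v4) := by linarith
  have hA0 := mul_nonneg hv4.le (sub_nonneg.2 hA)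
  have hB0 := mul_nonneg hv3.le (sub_nonneg.2 hB)
  have hC0 := mul_nonneg hv2 (sub_nonneg.2 hC)
  have hD0 := mul_nonneg hδ (sub_nonneg.2 hD)
  have hAeq : p2 * p3 * (p1 + p4) = 1 / 27 :=
    (sub_eq_zero.1 ((mul_eq_zero.1 (by linarith : _ = (0 : ℝ))).resolve_left hv4.ne')).symm
  have hBeq : p2 * p4 * (p1 + p3) = 1 / 27 :=
    (sub_eq_zero.1 ((mul_eq_zero.1 (by linarith : _ = (0 : ℝ))).resolve_left hv3.ne')).symm
  obtain ⟨hp2, hp3, _⟩ := eq_one_third_of_mul_mul_eq h2 h3 (by positivity) (by linarith) hAeq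
  obtain ⟨-, hp4, _⟩ := eq_one_third_of_mul_mul_eq h2 h4 (by positivity) (by linarith) hBeq
  exact ⟨by linarith, hp2, hp3, hp4⟩

end SimplexCubic

theorem stmt1_general (v1 v2 v3 v4 : ℝ)
    (hv2 : 0 < v2) (hv3 : 0 < v3) (hv4 : 0 < v4)
    (hsat : v2 + v3 + v4 ≤ v1) :
    (∀ p1 p2 p3 p4 : ℝ, 0 ≤ p1 → 0 ≤ p2 → 0 ≤ p3 → 0 ≤ p4 →
      p1 + p2 + p3 + p4 = 1 →
      (v4 * p1 * p2 * p3 + v3 * p1 * p2 * p4 + v2 * p1 * p3 * p4 + v1 * p2 * p3 * p4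
          = v1 / 27 ↔
        p1 = 0 ∧ p2 = 1/3 ∧ p3 = 1/3 ∧ p4 = 1/3)) ∧
    (∀ p1 p2 p3 p4 : ℝ, 0 ≤ p1 → 0 ≤ p2 → 0 ≤ p3 → 0 ≤ p4 →
      p1 + p2 + p3 + p4 = 1 →
      (∀ q1 q2 q3 q4 : ℝ, 0 ≤ q1 → 0 ≤ q2 → 0 ≤ q3 → 0 ≤ q4 →
        q1 + q2 + q3 + q4 = 1 →
        v4 * q1 * q2 * q3 + v3 * q1 * q2 * q4 + v2 * q1 * q3 * q4 + v1 * q2 * q3 * q4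
          ≤ v4 * p1 * p2 * p3 + v3 * p1 * p2 * p4 + v2 * p1 * p3 * p4
            + v1 * p2 * p3 * p4) →
      p1 = 0 ∧ p2 = 1/3 ∧ p3 = 1/3 ∧ p4 = 1/3) := by
  refine ⟨fun p1 p2 p3 p4 h1 h2 h3 h4 hs => ⟨?_, ?_⟩,
    fun p1 p2 p3 p4 h1 h2 h3 h4 hs hmax => ?_⟩
  · exact eq_of_simplexCubic_eq hv2.le hv3 hv4 hsat h1 h2 h3 h4 hs
  · rintro ⟨rfl, rfl, rfl, rfl⟩
    exact simplexCubic_zero_third_third_third v1 v2 v3 v4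
  · refine eq_of_simplexCubic_eq hv2.le hv3 hv4 hsat h1 h2 h3 h4 hs
      (le_antisymm (simplexCubic_le hv2.le hv3.le hv4.le hsat h1 h2 h3 h4 hs) ?_)
    rw [← simplexCubic_zero_third_third_third v1 v2 v3 v4]
    exact hmax 0 (1 / 3) (1 / 3) (1 / 3) le_rfl (by norm_num) (by norm_num) (by norm_num)
      (by norm_num)

/-- If `v1 ≥ v2 + v3 + v4` with all `vi > 0`, then a point `p` of the probability
simplex satisfies `L(v,p) = v1/27` iff `p = (0, 1/3, 1/3, 1/3)`; in particular
`(0, 1/3, 1/3, 1/3)` is the unique maximizer of `L(v,·)` over the simplex. -/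
theorem stmt1 (v1 v2 v3 v4 : ℝ)
    (hv1 : 0 < v1) (hv2 : 0 < v2) (hv3 : 0 < v3) (hv4 : 0 < v4)
    (hsat : v2 + v3 + v4 ≤ v1) :
    (∀ p1 p2 p3 p4 : ℝ, 0 ≤ p1 → 0 ≤ p2 → 0 ≤ p3 → 0 ≤ p4 →
      p1 + p2 + p3 + p4 = 1 →
      (v4 * p1 * p2 * p3 + v3 * p1 * p2 * p4 + v2 * p1 * p3 * p4 + v1 * p2 * p3 * p4
          = v1 / 27 ↔
        p1 = 0 ∧ p2 = 1/3 ∧ p3 = 1/3 ∧ p4 = 1/3)) ∧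
    (∀ p1 p2 p3 p4 : ℝ, 0 ≤ p1 → 0 ≤ p2 → 0 ≤ p3 → 0 ≤ p4 →
      p1 + p2 + p3 + p4 = 1 →
      (∀ q1 q2 q3 q4 : ℝ, 0 ≤ q1 → 0 ≤ q2 → 0 ≤ q3 → 0 ≤ q4 →
        q1 + q2 + q3 + q4 = 1 →
        v4 * q1 * q2 * q3 + v3 * q1 * q2 * q4 + v2 * q1 * q3 * q4 + v1 * q2 * q3 * q4
          ≤ v4 * p1 * p2 * p3 + v3 * p1 * p2 * p4 + v2 * p1 * p3 * p4
            + v1 * p2 * p3 * p4) →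
      p1 = 0 ∧ p2 = 1/3 ∧ p3 = 1/3 ∧ p4 = 1/3) :=
  stmt1_general v1 v2 v3 v4 hv2 hv3 hv4 hsat
end

section
/- Suppose 0 < v1 < v2 < v3 < v4 and v4 < v1 + v2 + v3. Then max{L13, L14, L24} ≤ max{L12, L23, L34}. -/
/-!
Write `L v p = ∑ i, v i * ∏ j ≠ i, p j`. It is linear in `v` and invariant under permuting the
coordinates of `v` and `p` simultaneously, so `Lmax` is a convex function of `v` that is invariant
under permutations. Hence `Lmax` cannot increase under a transfer that moves two coordinates of `v`
towards each other while keeping their sum: the new vector lies on the segment between `v` and `v`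
with those two coordinates swapped. Each of `L13`, `L14`, `L24` arises from `L12` or `L23` by two
such transfers, e.g. with `b = (v1 + v2)/2`,
`(b, b, v3, v4) ↦ (b, v2, b + v3 - v2, v4) ↦ ((v1 + v3)/2, v2, (v1 + v3)/2, v4)`.
-/

/-- `Lmax4 v1 v2 v3 v4` is the supremum of
`L(v,p) = v4·p1·p2·p3 + v3·p1·p2·p4 + v2·p1·p3·p4 + v1·p2·p3·p4`
over the probability simplex. -/
noncomputable def Lmax4 (v1 v2 v3 v4 : ℝ) : ℝ :=
  sSup {x : ℝ | ∃ p1 p2 p3 p4 : ℝ, 0 ≤ p1 ∧ 0 ≤ p2 ∧ 0 ≤ p3 ∧ 0 ≤ p4 ∧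
    p1 + p2 + p3 + p4 = 1 ∧
    x = v4 * p1 * p2 * p3 + v3 * p1 * p2 * p4 + v2 * p1 * p3 * p4
        + v1 * p2 * p3 * p4}

open Finset

section General

variable {ι : Type*} [Fintype ι]

lemma comp_perm_mem_stdSimplex {p : ι → ℝ} (hp : p ∈ stdSimplex ℝ ι) (σ : Equiv.Perm ι) :
    p ∘ σ ∈ stdSimplex ℝ ι :=
  ⟨fun i ↦ hp.1 (σ i), (Equiv.sum_comp σ p).trans hp.2⟩

variable [DecidableEq ι]

def L (v p : ι → ℝ) : ℝ := ∑ i, v i * ∏ j ∈ univ.erase i, p j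

noncomputable def Lmax (v : ι → ℝ) : ℝ := sSup (L v '' stdSimplex ℝ ι)

lemma L_comp_perm (v p : ι → ℝ) (σ : Equiv.Perm ι) : L (v ∘ σ) (p ∘ σ) = L v p := by
  have hprod (i : ι) : ∏ j ∈ univ.erase i, p (σ j) = ∏ j ∈ univ.erase (σ i), p j := by
    refine (prod_map (univ.erase i) σ.toEmbedding p).symm.trans ?_
    rw [map_erase, map_univ_equiv]
    rfl
  simp only [L, Function.comp_apply, hprod]
  exact Equiv.sum_comp σ fun i ↦ v i * ∏ j ∈ univ.erase i, p j

lemma L_add (x y p : ι → ℝ) : L (x + y) p = L x p + L y p := by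
  simp only [L, Pi.add_apply, add_mul, sum_add_distrib]

lemma L_smul (c : ℝ) (x p : ι → ℝ) : L (c • x) p = c * L x p := by
  simp only [L, Pi.smul_apply, smul_eq_mul, mul_sum, mul_assoc]

lemma bddAbove_L_image (v : ι → ℝ) : BddAbove (L v '' stdSimplex ℝ ι) :=
  ((isCompact_stdSimplex ℝ ι).image (by unfold L; fun_prop)).bddAbove

lemma L_le_Lmax (v : ι → ℝ) {p : ι → ℝ} (hp : p ∈ stdSimplex ℝ ι) : L v p ≤ Lmax v :=
  le_csSup (bddAbove_L_image v) (Set.mem_image_of_mem _ hp)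

lemma Lmax_le [Nonempty ι] {v : ι → ℝ} {c : ℝ} (h : ∀ p ∈ stdSimplex ℝ ι, L v p ≤ c) :
    Lmax v ≤ c :=
  csSup_le (Set.Nonempty.image _ ⟨_, single_mem_stdSimplex ℝ (Classical.arbitrary ι)⟩)
    (Set.forall_mem_image.2 h)

lemma Lmax_comp_perm_le [Nonempty ι] (v : ι → ℝ) (σ : Equiv.Perm ι) :
    Lmax (v ∘ σ) ≤ Lmax v := by
  refine Lmax_le fun p hp ↦ ?_
  calc L (v ∘ σ) p = L (v ∘ σ) ((p ∘ σ.symm) ∘ σ) := by simp [Function.comp_def]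
    _ = L v (p ∘ σ.symm) := L_comp_perm _ _ σ
    _ ≤ Lmax v := L_le_Lmax v (comp_perm_mem_stdSimplex hp σ.symm)

lemma convexOn_Lmax [Nonempty ι] : ConvexOn ℝ Set.univ (Lmax : (ι → ℝ) → ℝ) := by
  refine ⟨convex_univ, fun x _ y _ a b ha hb hab ↦ Lmax_le fun p hp ↦ ?_⟩
  rw [L_add, L_smul, L_smul, smul_eq_mul, smul_eq_mul]
  gcongr <;> exact L_le_Lmax _ hp

lemma Lmax_le_of_transfer [Nonempty ι] {x z : ι → ℝ} {i j : ι}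
    (hz : z i ∈ Set.uIcc (x i) (x j)) (hsum : z i + z j = x i + x j)
    (hrest : ∀ k, k ≠ i → k ≠ j → z k = x k) : Lmax z ≤ Lmax x := by
  have hseg : z ∈ segment ℝ x (x ∘ Equiv.swap i j) := by
    rw [← segment_eq_uIcc] at hz
    obtain ⟨a, b, ha, hb, hab, hzi⟩ := hz
    refine ⟨a, b, ha, hb, hab, funext fun k ↦ ?_⟩
    simp only [smul_eq_mul] at hzi
    simp only [Pi.add_apply, Pi.smul_apply, smul_eq_mul, Function.comp_apply]
    rcases eq_or_ne k i with rfl | hki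
    · rw [Equiv.swap_apply_left, hzi]
    rcases eq_or_ne k j with rfl | hkj
    · rw [Equiv.swap_apply_right]
      linear_combination (x i + x k) * hab - hzi - hsum
    · rw [Equiv.swap_apply_of_ne_of_ne hki hkj, hrest k hki hkj]
      linear_combination x k * hab
  calc Lmax z ≤ max (Lmax x) (Lmax (x ∘ Equiv.swap i j)) :=
        convexOn_Lmax.le_on_segment (Set.mem_univ _) (Set.mem_univ _) hseg
    _ = Lmax x := max_eq_left (Lmax_comp_perm_le x _)

end General

lemma L_fin_four (v p : Fin 4 → ℝ) :
    L v p = v 3 * p 0 * p 1 * p 2 + v 2 * p 0 * p 1 * p 3 + v 1 * p 0 * p 2 * p 3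
      + v 0 * p 1 * p 2 * p 3 := by
  have h0 : univ.erase (0 : Fin 4) = {1, 2, 3} := by decide
  have h1 : univ.erase (1 : Fin 4) = {0, 2, 3} := by decide
  have h2 : univ.erase (2 : Fin 4) = {0, 1, 3} := by decide
  have h3 : univ.erase (3 : Fin 4) = {0, 1, 2} := by decide
  simp only [L, Fin.sum_univ_four, h0, h1, h2, h3, prod_insert, prod_singleton, mem_insert,
    mem_singleton, Fin.reduceEq, or_self, not_false_eq_true]
  ring

lemma Lmax4_eq_Lmax (v1 v2 v3 v4 : ℝ) : Lmax4 v1 v2 v3 v4 = Lmax ![v1, v2, v3, v4] := by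
  unfold Lmax4 Lmax
  congr 1
  ext x
  simp only [Set.mem_ofPred_eq, Set.mem_image, stdSimplex, L_fin_four, Fin.sum_univ_four]
  constructor
  · rintro ⟨p1, p2, p3, p4, h1, h2, h3, h4, hs, rfl⟩
    refine ⟨![p1, p2, p3, p4], ⟨fun i ↦ ?_, by simpa using hs⟩, by simp⟩
    fin_cases i <;> simpa
  · rintro ⟨p, ⟨hp, hs⟩, rfl⟩
    exact ⟨p 0, p 1, p 2, p 3, hp 0, hp 1, hp 2, hp 3, hs, by simp⟩

lemma L13_le_L12 {v1 v2 v3 v4 : ℝ} (h12 : v1 ≤ v2) (h23 : v2 ≤ v3) :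
    Lmax4 ((v1 + v3)/2) v2 ((v1 + v3)/2) v4 ≤ Lmax4 ((v1 + v2)/2) ((v1 + v2)/2) v3 v4 := by
  simp only [Lmax4_eq_Lmax]
  calc _ ≤ Lmax ![(v1 + v2)/2, v2, (v1 + v2)/2 + v3 - v2, v4] :=
        Lmax_le_of_transfer (i := 0) (j := 2) ?_ ?_ ?_
    _ ≤ _ := Lmax_le_of_transfer (i := 1) (j := 2) ?_ ?_ ?_
  all_goals
    simp [Set.mem_uIcc, Fin.forall_fin_succ] <;> first | (left; constructor <;> linarith) | ring

lemma L14_le_L12 {v1 v2 v3 v4 : ℝ} (h12 : v1 ≤ v2) (h24 : v2 ≤ v4) :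
    Lmax4 ((v1 + v4)/2) v2 v3 ((v1 + v4)/2) ≤ Lmax4 ((v1 + v2)/2) ((v1 + v2)/2) v3 v4 := by
  simp only [Lmax4_eq_Lmax]
  calc _ ≤ Lmax ![(v1 + v2)/2, v2, v3, (v1 + v2)/2 + v4 - v2] :=
        Lmax_le_of_transfer (i := 0) (j := 3) ?_ ?_ ?_
    _ ≤ _ := Lmax_le_of_transfer (i := 1) (j := 3) ?_ ?_ ?_
  all_goals
    simp [Set.mem_uIcc, Fin.forall_fin_succ] <;> first | (left; constructor <;> linarith) | ring

lemma L24_le_L23 {v1 v2 v3 v4 : ℝ} (h23 : v2 ≤ v3) (h34 : v3 ≤ v4) :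
    Lmax4 v1 ((v2 + v4)/2) v3 ((v2 + v4)/2) ≤ Lmax4 v1 ((v2 + v3)/2) ((v2 + v3)/2) v4 := by
  simp only [Lmax4_eq_Lmax]
  calc _ ≤ Lmax ![v1, (v2 + v3)/2, v3, (v2 + v3)/2 + v4 - v3] :=
        Lmax_le_of_transfer (i := 1) (j := 3) ?_ ?_ ?_
    _ ≤ _ := Lmax_le_of_transfer (i := 2) (j := 3) ?_ ?_ ?_
  all_goals
    simp [Set.mem_uIcc, Fin.forall_fin_succ] <;> first | (left; constructor <;> linarith) | ring

theorem stmt10_general (v1 v2 v3 v4 : ℝ)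
    (h12 : v1 < v2) (h23 : v2 < v3) (h34 : v3 < v4) :
    max (max (Lmax4 ((v1 + v3)/2) v2 ((v1 + v3)/2) v4)
             (Lmax4 ((v1 + v4)/2) v2 v3 ((v1 + v4)/2)))
        (Lmax4 v1 ((v2 + v4)/2) v3 ((v2 + v4)/2))
      ≤ max (max (Lmax4 ((v1 + v2)/2) ((v1 + v2)/2) v3 v4)
                 (Lmax4 v1 ((v2 + v3)/2) ((v2 + v3)/2) v4))
            (Lmax4 v1 v2 ((v3 + v4)/2) ((v3 + v4)/2)) := by
  refine max_le (max_le ?_ ?_) ?_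
  · exact (L13_le_L12 h12.le h23.le).trans (le_max_of_le_left (le_max_left _ _))
  · exact (L14_le_L12 h12.le (h23.trans h34).le).trans (le_max_of_le_left (le_max_left _ _))
  · exact (L24_le_L23 h23.le h34.le).trans (le_max_of_le_left (le_max_right _ _))

/-- If `0 < v1 < v2 < v3 < v4` and `v4 < v1 + v2 + v3`, then
`max{L13, L14, L24} ≤ max{L12, L23, L34}`, where `Lij` is `Lmax` with `vi,vj`
both replaced by their average. -/
theorem stmt10 (v1 v2 v3 v4 : ℝ)
    (hv1 : 0 < v1) (h12 : v1 < v2) (h23 : v2 < v3) (h34 : v3 < v4)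
    (hsat : v4 < v1 + v2 + v3) :
    max (max (Lmax4 ((v1 + v3)/2) v2 ((v1 + v3)/2) v4)
             (Lmax4 ((v1 + v4)/2) v2 v3 ((v1 + v4)/2)))
        (Lmax4 v1 ((v2 + v4)/2) v3 ((v2 + v4)/2))
      ≤ max (max (Lmax4 ((v1 + v2)/2) ((v1 + v2)/2) v3 v4)
                 (Lmax4 v1 ((v2 + v3)/2) ((v2 + v3)/2) v4))
            (Lmax4 v1 v2 ((v3 + v4)/2) ((v3 + v4)/2)) :=
  stmt10_general v1 v2 v3 v4 h12 h23 h34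
end

section
/- Fix v2 ≥ v3 ≥ v4 > 0. Then as v1 increases to v2 + v3 + v4 from below, the quantity Q(v1,v2,v3,v4) = (v1+v2+v3+v4)/Lmax[v1,v2,v3,v4] tends to 54; in particular the bound R_u(v) < 1 − (3/4)·2^{1/3} on the region {v1 < v2+v3+v4} is sharp. -/
/-- Relative loss of efficiency of the uniform design. -/
noncomputable def Ru (v1 v2 v3 v4 : ℝ) : ℝ :=
  1 - (1/4) * ((v1 + v2 + v3 + v4) / Lmax4 v1 v2 v3 v4) ^ ((1 : ℝ)/3)

open Filter Topology

def simplexValues (v1 v2 v3 v4 : ℝ) : Set ℝ :=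
  {x : ℝ | ∃ p1 p2 p3 p4 : ℝ, 0 ≤ p1 ∧ 0 ≤ p2 ∧ 0 ≤ p3 ∧ 0 ≤ p4 ∧
    p1 + p2 + p3 + p4 = 1 ∧
    x = v4 * p1 * p2 * p3 + v3 * p1 * p2 * p4 + v2 * p1 * p3 * p4
        + v1 * p2 * p3 * p4}

lemma Lmax4_eq_sSup_simplexValues (v1 v2 v3 v4 : ℝ) :
    Lmax4 v1 v2 v3 v4 = sSup (simplexValues v1 v2 v3 v4) := rfl

lemma mul_mul_le_one_div_27 {a b c : ℝ} (ha : 0 ≤ a) (hb : 0 ≤ b) (hc : 0 ≤ c)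
    (h : a + b + c = 1) : a * b * c ≤ 1 / 27 := by
  nlinarith [sq_nonneg (a - b), sq_nonneg (b - c), sq_nonneg (a - c), sq_nonneg (a + b - 2 * c),
    mul_nonneg ha hb, mul_nonneg hb hc, mul_nonneg ha hc]

section Lmax4

variable {v1 v2 v3 v4 : ℝ}

lemma simplex_value_le_of_le_add (hv2 : 0 ≤ v2) (hv3 : 0 ≤ v3) (hv4 : 0 ≤ v4)
    (h1 : v1 ≤ v2 + v3 + v4) {p1 p2 p3 p4 : ℝ} (hp1 : 0 ≤ p1) (hp2 : 0 ≤ p2) (hp3 : 0 ≤ p3)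
    (hp4 : 0 ≤ p4) (hsum : p1 + p2 + p3 + p4 = 1) :
    v4 * p1 * p2 * p3 + v3 * p1 * p2 * p4 + v2 * p1 * p3 * p4 + v1 * p2 * p3 * p4
      ≤ (v2 + v3 + v4) / 27 := by
  have h2 := mul_mul_le_one_div_27 hp3 hp4 (add_nonneg hp1 hp2) (by linarith)
  have h3 := mul_mul_le_one_div_27 hp2 hp4 (add_nonneg hp1 hp3) (by linarith)
  have h4 := mul_mul_le_one_div_27 hp2 hp3 (add_nonneg hp1 hp4) (by linarith)
  have h234 : 0 ≤ p2 * p3 * p4 := by positivity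
  nlinarith [mul_le_mul_of_nonneg_left h2 hv2, mul_le_mul_of_nonneg_left h3 hv3,
    mul_le_mul_of_nonneg_left h4 hv4, mul_nonneg (sub_nonneg.2 h1) h234]

lemma Lmax4_mem_Icc (hv2 : 0 ≤ v2) (hv3 : 0 ≤ v3) (hv4 : 0 ≤ v4) (h1 : v1 ≤ v2 + v3 + v4) :
    Lmax4 v1 v2 v3 v4 ∈ Set.Icc (v1 / 27) ((v2 + v3 + v4) / 27) := by
  rw [Lmax4_eq_sSup_simplexValues]
  have hmem : v1 / 27 ∈ simplexValues v1 v2 v3 v4 :=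
    ⟨0, 1 / 3, 1 / 3, 1 / 3, le_rfl, by norm_num, by norm_num, by norm_num, by norm_num, by ring⟩
  have hub : (v2 + v3 + v4) / 27 ∈ upperBounds (simplexValues v1 v2 v3 v4) := by
    rintro x ⟨p1, p2, p3, p4, hp1, hp2, hp3, hp4, hsum, rfl⟩
    exact simplex_value_le_of_le_add hv2 hv3 hv4 h1 hp1 hp2 hp3 hp4 hsum
  exact ⟨le_csSup ⟨_, hub⟩ hmem, csSup_le ⟨_, hmem⟩ hub⟩

lemma tendsto_Lmax4_nhdsLT (hv2 : 0 ≤ v2) (hv3 : 0 ≤ v3) (hv4 : 0 ≤ v4) :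
    Tendsto (fun v1 => Lmax4 v1 v2 v3 v4) (𝓝[<] (v2 + v3 + v4)) (𝓝 ((v2 + v3 + v4) / 27)) := by
  have hlower : Tendsto (fun v1 : ℝ => v1 / 27) (𝓝[<] (v2 + v3 + v4)) (𝓝 ((v2 + v3 + v4) / 27)) :=
    (tendsto_id.div_const 27).mono_left nhdsWithin_le_nhds
  have hbounds : ∀ᶠ v1 in 𝓝[<] (v2 + v3 + v4),
      Lmax4 v1 v2 v3 v4 ∈ Set.Icc (v1 / 27) ((v2 + v3 + v4) / 27) := by
    filter_upwards [self_mem_nhdsWithin] with v1 h1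
    exact Lmax4_mem_Icc hv2 hv3 hv4 (le_of_lt h1)
  exact tendsto_of_tendsto_of_tendsto_of_le_of_le' hlower tendsto_const_nhds
    (hbounds.mono fun _ h => h.1) (hbounds.mono fun _ h => h.2)

lemma tendsto_sum_div_Lmax4_nhdsLT (hv2 : 0 ≤ v2) (hv3 : 0 ≤ v3) (hv4 : 0 ≤ v4)
    (hs : 0 < v2 + v3 + v4) :
    Tendsto (fun v1 => (v1 + v2 + v3 + v4) / Lmax4 v1 v2 v3 v4) (𝓝[<] (v2 + v3 + v4)) (𝓝 54) := by
  have hnum : Tendsto (fun v1 : ℝ => v1 + v2 + v3 + v4) (𝓝[<] (v2 + v3 + v4))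
      (𝓝 (v2 + v3 + v4 + v2 + v3 + v4)) :=
    (((tendsto_id.add_const v2).add_const v3).add_const v4).mono_left nhdsWithin_le_nhds
  have h54 : (v2 + v3 + v4 + v2 + v3 + v4) / ((v2 + v3 + v4) / 27) = 54 := by
    field_simp
    ring
  rw [← h54]
  exact hnum.div (tendsto_Lmax4_nhdsLT hv2 hv3 hv4) (by positivity)

lemma tendsto_Ru_nhdsLT (hv2 : 0 ≤ v2) (hv3 : 0 ≤ v3) (hv4 : 0 ≤ v4) (hs : 0 < v2 + v3 + v4) :
    Tendsto (fun v1 => Ru v1 v2 v3 v4) (𝓝[<] (v2 + v3 + v4))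
      (𝓝 (1 - (3 / 4) * (2 : ℝ) ^ ((1 : ℝ) / 3))) := by
  have hcbrt : (54 : ℝ) ^ ((1 : ℝ) / 3) = 3 * (2 : ℝ) ^ ((1 : ℝ) / 3) := by
    rw [show (54 : ℝ) = 3 ^ (3 : ℝ) * 2 by norm_num, Real.mul_rpow (by positivity) (by norm_num),
      ← Real.rpow_mul (by norm_num)]
    norm_num
  have hlim := (((tendsto_sum_div_Lmax4_nhdsLT hv2 hv3 hv4 hs).rpow_const
    (Or.inr (by norm_num : (0 : ℝ) ≤ 1 / 3))).const_mul (1 / 4)).const_sub 1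
  rw [hcbrt, show 1 - 1 / 4 * (3 * (2 : ℝ) ^ ((1 : ℝ) / 3)) = 1 - 3 / 4 * 2 ^ ((1 : ℝ) / 3) by ring]
    at hlim
  exact hlim

end Lmax4

/-- Fix `v2 ≥ v3 ≥ v4 > 0`.  As `v1 ↑ v2 + v3 + v4`,
`Q(v1,v2,v3,v4) = (v1+v2+v3+v4)/Lmax[v1,v2,v3,v4] → 54`; in particular the
bound `R_u(v) < 1 − (3/4)·2^{1/3}` on the region `{v1 < v2+v3+v4}` is sharp. -/
theorem stmt15 (v2 v3 v4 : ℝ)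
    (hv4 : 0 < v4) (h34 : v4 ≤ v3) (h23 : v3 ≤ v2) :
    Filter.Tendsto (fun v1 : ℝ => (v1 + v2 + v3 + v4) / Lmax4 v1 v2 v3 v4)
      (nhdsWithin (v2 + v3 + v4) (Set.Iio (v2 + v3 + v4))) (nhds 54) ∧
    ∀ ε : ℝ, 0 < ε → ∃ v1 : ℝ, 0 < v1 ∧ v1 < v2 + v3 + v4 ∧
      1 - (3/4) * (2 : ℝ) ^ ((1 : ℝ)/3) - ε < Ru v1 v2 v3 v4 := by
  have hv3 : 0 ≤ v3 := hv4.le.trans h34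
  have hv2 : 0 ≤ v2 := hv3.trans h23
  have hs : 0 < v2 + v3 + v4 := by positivity
  refine ⟨tendsto_sum_div_Lmax4_nhdsLT hv2 hv3 hv4.le hs, fun ε hε => ?_⟩
  have hpos : ∀ᶠ v1 in 𝓝[<] (v2 + v3 + v4), 0 < v1 :=
    eventually_nhdsWithin_of_eventually_nhds (eventually_gt_nhds hs)
  have hclose := (tendsto_Ru_nhdsLT hv2 hv3 hv4.le hs).eventually_const_lt
    (sub_lt_self _ hε)
  obtain ⟨v1, h0, hlt, hRu⟩ := (hpos.and (eventually_mem_nhdsWithin.and hclose)).exists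
  exact ⟨v1, h0, hlt, hRu⟩
end

section
/- Let n ≥ 1 and 1 ≤ q ≤ n. Let X be an n×q real matrix with every entry equal to +1 or −1 such that Xᵀ·X = n·I_q. Let w1,…,wn > 0 with w_m = min{wi} and w_M = max{wi}. Then for any p1,…,pn ≥ 0 with p1+⋯+pn = 1, det(Xᵀ·diag(w1·p1,…,wn·pn)·X) ≤ w_M^q, while the uniform design satisfies det(Xᵀ·diag(w1/n,…,wn/n)·X) ≥ w_m^q; consequently det(Xᵀ·diag(w1/n,…,wn/n)·X)^{1/q} ≥ (w_m/w_M)·det(Xᵀ·diag(w1·p1,…,wn·pn)·X)^{1/q}, so the loss of efficiency of the uniform design is at most 1 − w_m/w_M. -/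
/-!
Both determinant bounds go through the eigenvalues of the information matrix
`Xᵀ · diag d · X`. Since the entries of `X` are `±1`, its trace is `q · ∑ dᵢ`, so for a design
`p` the trace is at most `q · w_M` and AM-GM on the eigenvalues bounds the determinant by
`w_M ^ q`. For the uniform design, orthogonality `Xᵀ X = n · I` turns `diag (wᵢ / n) ≥ w_m / n`
into `Xᵀ · diag (wᵢ / n) · X ≥ w_m · I` in the Loewner order, so every eigenvalue is at least `w_m`.
-/

open Matrix

theorem Real.prod_le_sum_div_card_pow {ι : Type*} [Fintype ι] [Nonempty ι] {z : ι → ℝ}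
    (hz : ∀ i, 0 ≤ z i) : ∏ i, z i ≤ ((∑ i, z i) / Fintype.card ι) ^ Fintype.card ι := by
  have hprod : 0 ≤ ∏ i, z i := Finset.prod_nonneg fun i _ => hz i
  have amgm := Real.geom_mean_le_arith_mean Finset.univ (fun _ => 1) z (by simp)
    (by simp [Fintype.card_pos]) (fun i _ => hz i)
  simp only [Real.rpow_one, Finset.sum_const, Finset.card_univ, nsmul_eq_mul, mul_one,
    one_mul] at amgm
  calc ∏ i, z i = ((∏ i, z i) ^ (Fintype.card ι : ℝ)⁻¹) ^ Fintype.card ι :=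
        (Real.rpow_inv_natCast_pow hprod Fintype.card_ne_zero).symm
    _ ≤ _ := by gcongr

namespace Matrix

variable {m n : Type*} [Fintype m] [Fintype n]

theorem PosSemidef.det_le_trace_div_card_pow [DecidableEq n] [Nonempty n]
    {A : Matrix n n ℝ} (hA : A.PosSemidef) :
    A.det ≤ (A.trace / Fintype.card n) ^ Fintype.card n := by
  rw [hA.1.det_eq_prod_eigenvalues, hA.1.trace_eq_sum_eigenvalues]
  exact_mod_cast Real.prod_le_sum_div_card_pow hA.eigenvalues_nonneg

theorem posSemidef_transpose_mul_diagonal_mul [DecidableEq m] (X : Matrix m n ℝ)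
    {d : m → ℝ} (hd : ∀ i, 0 ≤ d i) : (Xᵀ * diagonal d * X).PosSemidef := by
  simpa using (posSemidef_diagonal_iff.mpr hd).conjTranspose_mul_mul_same X

theorem trace_transpose_mul_diagonal_mul [DecidableEq m] {X : Matrix m n ℝ}
    (hX : ∀ i j, X i j ^ 2 = 1) (d : m → ℝ) :
    (Xᵀ * diagonal d * X).trace = Fintype.card n * ∑ i, d i := by
  have hdiag (j : n) : (Xᵀ * diagonal d * X) j j = ∑ i, d i := by
    simp only [mul_apply, transpose_apply, diagonal_apply, mul_ite, mul_zero,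
      Finset.sum_ite_eq', Finset.mem_univ, if_true]
    exact Finset.sum_congr rfl fun i _ => by linear_combination d i * hX i j
  simp [trace, hdiag]

section LoewnerOrder

open scoped MatrixOrder

theorem IsHermitian.le_eigenvalues [DecidableEq n] {A : Matrix n n ℝ} (hA : A.IsHermitian)
    {c : ℝ} (hc : c • 1 ≤ A) (i : n) : c ≤ hA.eigenvalues i := by
  rw [← Algebra.algebraMap_eq_smul_one, algebraMap_le_iff_le_spectrum] at hc
  exact hc _ (hA.spectrum_real_eq_range_eigenvalues ▸ Set.mem_range_self i)

theorem IsHermitian.pow_card_le_det [DecidableEq n] {A : Matrix n n ℝ} (hA : A.IsHermitian)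
    {c : ℝ} (hc0 : 0 ≤ c) (hc : c • 1 ≤ A) : c ^ Fintype.card n ≤ A.det := by
  rw [hA.det_eq_prod_eigenvalues, ← Finset.card_univ, ← Finset.prod_const]
  exact_mod_cast Finset.prod_le_prod (fun _ _ => hc0) fun i _ => hA.le_eigenvalues hc i

theorem smul_one_le_transpose_mul_diagonal_mul [DecidableEq m] [DecidableEq n]
    {X : Matrix m n ℝ} {N : ℝ} (horth : Xᵀ * X = N • 1) {d : m → ℝ} {c : ℝ}
    (hd : ∀ i, c ≤ d i) : (N * c) • (1 : Matrix n n ℝ) ≤ Xᵀ * diagonal d * X := by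
  have hsplit : diagonal d = diagonal (fun i => d i - c) + c • 1 := by
    rw [smul_one_eq_diagonal, diagonal_add]
    simp
  rw [le_iff, hsplit, Matrix.mul_add, Matrix.add_mul, Matrix.mul_smul, Matrix.mul_one,
    Matrix.smul_mul, horth, smul_smul, mul_comm, add_sub_cancel_right]
  exact posSemidef_transpose_mul_diagonal_mul X fun i => sub_nonneg.mpr (hd i)

end LoewnerOrder

theorem pow_card_le_det_transpose_mul_diagonal_mul [DecidableEq m] [DecidableEq n]
    {X : Matrix m n ℝ} {N : ℝ} (horth : Xᵀ * X = N • 1) {d : m → ℝ} {c : ℝ}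
    (hc : 0 ≤ N * c) (hd : ∀ i, c ≤ d i) :
    (N * c) ^ Fintype.card n ≤ (Xᵀ * diagonal d * X).det := by
  have hsymm : (Xᵀ * diagonal d * X).IsHermitian := by
    simpa using isHermitian_conjTranspose_mul_mul X (isHermitian_diagonal d)
  exact hsymm.pow_card_le_det hc (smul_one_le_transpose_mul_diagonal_mul horth hd)

theorem det_transpose_mul_diagonal_mul_le_pow [DecidableEq m] [DecidableEq n] [Nonempty n]
    {X : Matrix m n ℝ} (hX : ∀ i j, X i j ^ 2 = 1) {d : m → ℝ} (hd : ∀ i, 0 ≤ d i) {M : ℝ}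
    (hM : ∑ i, d i ≤ M) : (Xᵀ * diagonal d * X).det ≤ M ^ Fintype.card n := by
  have hpsd := posSemidef_transpose_mul_diagonal_mul X hd
  calc (Xᵀ * diagonal d * X).det
      ≤ ((Xᵀ * diagonal d * X).trace / Fintype.card n) ^ Fintype.card n :=
        hpsd.det_le_trace_div_card_pow
    _ = (∑ i, d i) ^ Fintype.card n := by
        rw [trace_transpose_mul_diagonal_mul hX, mul_div_cancel_left₀ _ (by positivity)]
    _ ≤ M ^ Fintype.card n := by gcongr; exact Finset.sum_nonneg fun i _ => hd i

end Matrix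

theorem Real.div_mul_rpow_inv_le_rpow_inv {a b m M : ℝ} {q : ℕ} (hq : q ≠ 0) (ha : 0 ≤ a)
    (hm : 0 < m) (hM : 0 < M) (haM : a ≤ M ^ q) (hmb : m ^ q ≤ b) :
    m / M * a ^ (q⁻¹ : ℝ) ≤ b ^ (q⁻¹ : ℝ) := by
  have hq_pos : (0 : ℝ) < q := by positivity
  calc m / M * a ^ (q⁻¹ : ℝ) ≤ m / M * M := by
        gcongr
        exact (Real.rpow_inv_le_iff_of_pos ha hM.le hq_pos).mpr (by simpa using haM)
    _ = m := div_mul_cancel₀ m hM.ne'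
    _ ≤ b ^ (q⁻¹ : ℝ) :=
        (Real.le_rpow_inv_iff_of_pos hm.le ((pow_pos hm q).le.trans hmb) hq_pos).mpr
          (by simpa using hmb)

theorem stmt18_general (n q : ℕ) (hn : 1 ≤ n) (hq1 : 1 ≤ q)
    (X : Matrix (Fin n) (Fin q) ℝ)
    (hX : ∀ i j, X i j = 1 ∨ X i j = -1)
    (horth : Xᵀ * X = (n : ℝ) • (1 : Matrix (Fin q) (Fin q) ℝ))
    (w : Fin n → ℝ) (hw : ∀ i, 0 < w i)
    (wm wM : ℝ) (hwm : IsLeast (Set.range w) wm)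
    (hwM : IsGreatest (Set.range w) wM)
    (p : Fin n → ℝ) (hp : ∀ i, 0 ≤ p i) (hsum : ∑ i, p i = 1) :
    (Xᵀ * Matrix.diagonal (fun i => w i * p i) * X).det ≤ wM ^ q ∧
    wm ^ q ≤ (Xᵀ * Matrix.diagonal (fun i => w i / n) * X).det ∧
    (wm / wM) * (Xᵀ * Matrix.diagonal (fun i => w i * p i) * X).det ^ ((1 : ℝ)/q)
      ≤ (Xᵀ * Matrix.diagonal (fun i => w i / n) * X).det ^ ((1 : ℝ)/q) := by
  have : Nonempty (Fin q) := ⟨⟨0, hq1⟩⟩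
  have hwm_pos : 0 < wm := by obtain ⟨i, rfl⟩ := hwm.1; exact hw i
  have hwM_pos : 0 < wM := by obtain ⟨i, rfl⟩ := hwM.1; exact hw i
  have hmean : ∑ i, w i * p i ≤ wM := calc
    ∑ i, w i * p i ≤ ∑ i, wM * p i := by gcongr with i; exacts [hp i, hwM.2 ⟨i, rfl⟩]
    _ = wM := by rw [← Finset.mul_sum, hsum, mul_one]
  have hupper : (Xᵀ * diagonal (fun i => w i * p i) * X).det ≤ wM ^ q := by
    simpa using det_transpose_mul_diagonal_mul_le_pow (fun i j => sq_eq_one_iff.mpr (hX i j))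
      (fun i => mul_nonneg (hw i).le (hp i)) hmean
  have hlower : wm ^ q ≤ (Xᵀ * diagonal (fun i => w i / n) * X).det := by
    have h := pow_card_le_det_transpose_mul_diagonal_mul horth (d := fun i => w i / n)
      (c := wm / n) (by positivity) fun i => by gcongr; exact hwm.2 ⟨i, rfl⟩
    rwa [mul_div_cancel₀ _ (by positivity), Fintype.card_fin] at h
  refine ⟨hupper, hlower, ?_⟩
  rw [one_div]
  exact Real.div_mul_rpow_inv_le_rpow_inv (by omega)
    (posSemidef_transpose_mul_diagonal_mul X fun i => mul_nonneg (hw i).le (hp i)).det_nonneg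
    hwm_pos hwM_pos hupper hlower

/-- Let `X` be an `n×q` matrix with ±1 entries and `Xᵀ·X = n·I_q`, let
`wi > 0` with minimum `w_m` and maximum `w_M`, and let `pi ≥ 0` sum to `1`.
Then `det(Xᵀ·diag(wi·pi)·X) ≤ w_M^q`, while the uniform design satisfies
`det(Xᵀ·diag(wi/n)·X) ≥ w_m^q`; consequently
`det(Xᵀ·diag(wi/n)·X)^{1/q} ≥ (w_m/w_M)·det(Xᵀ·diag(wi·pi)·X)^{1/q}`, so the
loss of efficiency of the uniform design is at most `1 − w_m/w_M`. -/
theorem stmt18 (n q : ℕ) (hn : 1 ≤ n) (hq1 : 1 ≤ q) (hq : q ≤ n)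
    (X : Matrix (Fin n) (Fin q) ℝ)
    (hX : ∀ i j, X i j = 1 ∨ X i j = -1)
    (horth : Xᵀ * X = (n : ℝ) • (1 : Matrix (Fin q) (Fin q) ℝ))
    (w : Fin n → ℝ) (hw : ∀ i, 0 < w i)
    (wm wM : ℝ) (hwm : IsLeast (Set.range w) wm)
    (hwM : IsGreatest (Set.range w) wM)
    (p : Fin n → ℝ) (hp : ∀ i, 0 ≤ p i) (hsum : ∑ i, p i = 1) :
    (Xᵀ * Matrix.diagonal (fun i => w i * p i) * X).det ≤ wM ^ q ∧
    wm ^ q ≤ (Xᵀ * Matrix.diagonal (fun i => w i / n) * X).det ∧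
    (wm / wM) * (Xᵀ * Matrix.diagonal (fun i => w i * p i) * X).det ^ ((1 : ℝ)/q)
      ≤ (Xᵀ * Matrix.diagonal (fun i => w i / n) * X).det ^ ((1 : ℝ)/q) :=
  stmt18_general n q hn hq1 X hX horth w hw wm wM hwm hwM p hp hsum
end
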